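/- arXiv:2107.13196 — 2 statements merged into one kernel-verified Lean document; each statement's English description precedes it below -/
import Mathlib

section
/- Let G be a complete multi-partite graph with partite sets X₁,…,X_k (k ≥ 2) of order n and let 1 ≤ r ≤ n. For an r-element subset S of V(G), the quantity |E_G(S)| (edges incident with S) achieves the minimum over all r-element subsets if and only if for each pair of distinct indices i, j in {1,…,k}: |X_i \ S| ≥ 2 + |X_j \ S| implies X_j ∩ S = ∅. -/
open Finset SimpleGraph

def incE {V : Type} (G : SimpleGraph V) (S : Finset V) : Set (Sym2 V) :=
  {e ∈ G.edgeSet | ∃ v ∈ S, v ∈ e}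

open scoped Classical

section Aux
variable {k : ℕ} {p : Fin k → ℕ}

/-- split a sum over `Fin k` into the `i`, `j` terms and the rest. -/
lemma sum_split {i j : Fin k} (hij : i ≠ j) (f g : Fin k → ℕ)
    (hfg : ∀ l, l ≠ i → l ≠ j → f l = g l) :
    ∑ l, f l = f i + f j + ∑ l ∈ univ \ {i, j}, g l := by
  rw [← Finset.sum_sdiff (subset_univ ({i, j} : Finset (Fin k))), Finset.sum_pair hij]
  have : ∑ l ∈ univ \ {i, j}, f l = ∑ l ∈ univ \ {i, j}, g l := by
    apply Finset.sum_congr rfl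
    intro l hl
    simp only [mem_sdiff, mem_insert, mem_singleton] at hl
    exact hfg l (fun h => hl.2 (Or.inl h)) (fun h => hl.2 (Or.inr h))
  omega

lemma sigma_fiber (t : ∀ i : Fin k, Finset (Fin (p i))) (i : Fin k) :
    ((univ.sigma fun l => t l).filter fun v : Σ l : Fin k, Fin (p l) => v.1 = i)
      = (t i).map ⟨Sigma.mk i, sigma_mk_injective⟩ := by
  ext ⟨l, x⟩
  simp only [mem_filter, Finset.mem_sigma, mem_univ, true_and, Finset.mem_map,
    Function.Embedding.coeFn_mk]
  constructor
  · rintro ⟨hx, rfl⟩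
    exact ⟨x, hx, rfl⟩
  · rintro ⟨y, hy, h⟩
    obtain ⟨rfl, h2⟩ := Sigma.mk.inj_iff.mp h
    cases eq_of_heq h2
    exact ⟨hy, rfl⟩

lemma univ_fiber_card (i : Fin k) :
    ((univ : Finset (Σ l : Fin k, Fin (p l))).filter fun v => v.1 = i).card = p i := by
  have : (univ : Finset (Σ l : Fin k, Fin (p l))) = univ.sigma fun _ => univ := by
    ext ⟨l, x⟩; simp
  rw [this, sigma_fiber, Finset.card_map, Finset.card_univ, Fintype.card_fin]

/-- `aS S i = |X_i \ S|`. -/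
def aS (S : Finset (Σ l : Fin k, Fin (p l))) (i : Fin k) : ℕ :=
  (Sᶜ.filter fun v => v.1 = i).card

lemma aS_eq_sdiff (S : Finset (Σ l : Fin k, Fin (p l))) (i : Fin k) :
    ((univ.filter fun v : Σ l : Fin k, Fin (p l) => v.1 = i) \ S).card = aS S i := by
  congr 1
  ext v
  simp only [mem_sdiff, mem_filter, mem_univ, true_and, Finset.mem_compl, aS]
  tauto

lemma aS_le (S : Finset (Σ l : Fin k, Fin (p l))) (i : Fin k) : aS S i ≤ p i := by
  rw [← univ_fiber_card (p := p) i]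
  apply Finset.card_le_card
  intro v hv
  simp only [mem_filter, Finset.mem_compl] at hv ⊢
  exact ⟨mem_univ _, hv.2⟩

lemma aS_eq_p_iff (S : Finset (Σ l : Fin k, Fin (p l))) (j : Fin k) :
    aS S j = p j ↔ ∀ x : Fin (p j), (⟨j, x⟩ : Σ l : Fin k, Fin (p l)) ∉ S := by
  constructor
  · intro h x
    have hsub : (Sᶜ.filter fun v : Σ l : Fin k, Fin (p l) => v.1 = j)
        ⊆ univ.filter fun v => v.1 = j := by
      intro v hv
      simp only [mem_filter, Finset.mem_compl] at hv ⊢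
      exact ⟨mem_univ _, hv.2⟩
    have heq := Finset.eq_of_subset_of_card_le hsub
      (by rw [univ_fiber_card]; exact h.ge)
    intro hxS
    have hx : (⟨j, x⟩ : Σ l : Fin k, Fin (p l)) ∈ univ.filter fun v => v.1 = j := by
      simp
    rw [← heq] at hx
    simp only [mem_filter, Finset.mem_compl] at hx
    exact hx.1 hxS
  · intro h
    have : (Sᶜ.filter fun v : Σ l : Fin k, Fin (p l) => v.1 = j)
        = univ.filter fun v => v.1 = j := by
      ext v
      simp only [mem_filter, Finset.mem_compl, mem_univ, true_and]
      refine ⟨fun hv => hv.2, fun hv => ⟨?_, hv⟩⟩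
      obtain ⟨l, x⟩ := v
      cases hv
      exact h x
    rw [aS, this, univ_fiber_card]

lemma aS_sum (S : Finset (Σ l : Fin k, Fin (p l))) :
    ∑ i, aS S i = Sᶜ.card :=
  (Finset.card_eq_sum_card_fiberwise fun v _ => mem_univ v.1).symm

lemma card_compl_eq (S : Finset (Σ l : Fin k, Fin (p l))) :
    Sᶜ.card = (∑ i, p i) - S.card := by
  rw [Finset.card_compl, Fintype.card_sigma]
  simp

/-- Any feasible fiber vector is realized by some set of the same cardinality. -/
lemma realize (S : Finset (Σ l : Fin k, Fin (p l))) (b : Fin k → ℕ)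
    (hbp : ∀ i, b i ≤ p i) (hbsum : ∑ i, b i = Sᶜ.card) :
    ∃ S' : Finset (Σ l : Fin k, Fin (p l)), S'.card = S.card ∧ ∀ i, aS S' i = b i := by
  have hC : ∀ i : Fin k, ∃ C : Finset (Fin (p i)), C ⊆ univ ∧ C.card = b i := fun i =>
    Finset.exists_subset_card_eq (by simpa using hbp i)
  choose C _ hCcard using hC
  refine ⟨univ.sigma fun i => (C i)ᶜ, ?_, ?_⟩
  · have hcompl : ((univ.sigma fun i => (C i)ᶜ : Finset (Σ l : Fin k, Fin (p l))))ᶜ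
        = univ.sigma fun i => C i := by
      ext ⟨l, x⟩
      simp [Finset.mem_sigma]
    have h1 : (univ.sigma fun i => (C i)ᶜ : Finset (Σ l : Fin k, Fin (p l))).card
        = ∑ i, (p i - b i) := by
      rw [Finset.card_sigma]
      exact Finset.sum_congr rfl fun i _ => by
        rw [Finset.card_compl, Fintype.card_fin, hCcard]
    rw [h1]
    have h2 : ∑ i, (p i - b i) = ∑ i, p i - ∑ i, b i :=
      Finset.sum_tsub_distrib univ fun i _ => hbp i
    have h3 := card_compl_eq S
    have h4 : S.card ≤ ∑ i, p i := by
      simpa [Fintype.card_sigma] using Finset.card_le_univ S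
    have h5 : ∑ i, b i ≤ ∑ i, p i := Finset.sum_le_sum fun i _ => hbp i
    omega
  · intro i
    have hcompl : ((univ.sigma fun i => (C i)ᶜ : Finset (Σ l : Fin k, Fin (p l))))ᶜ
        = univ.sigma fun i => C i := by
      ext ⟨l, x⟩
      simp [Finset.mem_sigma]
    rw [aS, hcompl, sigma_fiber, Finset.card_map, hCcard]

def Hgr (S : Finset (Σ i : Fin k, Fin (p i))) : SimpleGraph (Σ i : Fin k, Fin (p i)) where
  Adj u v := u.1 ≠ v.1 ∧ u ∉ S ∧ v ∉ S
  symm := ⟨fun u v ⟨h1, h2, h3⟩ => ⟨h1.symm, h3, h2⟩⟩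
  loopless := ⟨fun u h => h.1 rfl⟩

lemma Hgr_le (S : Finset (Σ i : Fin k, Fin (p i))) :
    Hgr S ≤ completeMultipartiteGraph fun i => Fin (p i) :=
  fun _ _ h => h.1

lemma incE_eq (S : Finset (Σ i : Fin k, Fin (p i))) :
    incE (completeMultipartiteGraph fun i => Fin (p i)) S =
      ↑((completeMultipartiteGraph fun i => Fin (p i)).edgeFinset \ (Hgr S).edgeFinset) := by
  ext e
  induction e with
  | h u v =>
    simp only [incE, Set.mem_setOf_eq, Finset.coe_sdiff, Set.mem_diff, mem_coe,
      mem_edgeFinset, mem_edgeSet, Sym2.mem_iff]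
    simp only [Hgr]
    constructor
    · rintro ⟨hadj, w, hwS, hw⟩
      refine ⟨hadj, fun h => ?_⟩
      rcases hw with rfl | rfl
      · exact h.2.1 hwS
      · exact h.2.2 hwS
    · rintro ⟨hadj, h⟩
      refine ⟨hadj, ?_⟩
      by_contra hc
      push_neg at hc
      exact h ⟨hadj, fun hu => (hc u hu).1 rfl, fun hv => (hc v hv).2 rfl⟩

lemma incE_ncard (S : Finset (Σ i : Fin k, Fin (p i))) :
    (incE (completeMultipartiteGraph fun i => Fin (p i)) S).ncard
      = (completeMultipartiteGraph fun i => Fin (p i)).edgeFinset.card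
        - (Hgr S).edgeFinset.card := by
  rw [incE_eq, Set.ncard_coe_finset, Finset.card_sdiff_of_subset]
  exact edgeFinset_mono (Hgr_le S)

lemma Hgr_degree (S : Finset (Σ i : Fin k, Fin (p i))) (v : Σ i : Fin k, Fin (p i)) :
    (Hgr S).degree v = if v ∈ S then 0 else Sᶜ.card - aS S v.1 := by
  rw [degree, neighborFinset_eq_filter]
  split_ifs with hv
  · rw [Finset.card_eq_zero, Finset.filter_eq_empty_iff]
    intro u _
    exact fun h => h.2.1 hv
  · have : (Finset.univ.filter fun u => (Hgr S).Adj v u)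
        = Sᶜ \ (Sᶜ.filter fun u => u.1 = v.1) := by
      ext u
      simp only [mem_filter, mem_univ, true_and, mem_sdiff, Finset.mem_compl]
      simp only [Hgr]
      constructor
      · rintro ⟨h1, _, h3⟩
        exact ⟨h3, fun h => h1 (h.2.symm)⟩
      · rintro ⟨h1, h2⟩
        exact ⟨fun h => h2 ⟨h1, h.symm⟩, hv, h1⟩
    rw [this, Finset.card_sdiff_of_subset (Finset.filter_subset _ _)]
    rfl

lemma Hgr_count (S : Finset (Σ i : Fin k, Fin (p i))) :
    2 * (Hgr S).edgeFinset.card + ∑ i, (aS S i) ^ 2 = Sᶜ.card ^ 2 := by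
  have hdeg := (Hgr S (p := p)).sum_degrees_eq_twice_card_edges
  have h1 : ∑ v, (Hgr S).degree v = ∑ v ∈ Sᶜ, (Sᶜ.card - aS S v.1) := by
    rw [← Finset.sum_compl_add_sum S (fun v => (Hgr S).degree v)]
    have hz : ∑ v ∈ S, (Hgr S).degree v = 0 :=
      Finset.sum_eq_zero fun v hv => by rw [Hgr_degree, if_pos hv]
    rw [hz, add_zero]
    exact Finset.sum_congr rfl fun v hv => by
      rw [Hgr_degree, if_neg (Finset.mem_compl.mp hv)]
  have h2 : ∑ v ∈ Sᶜ, (Sᶜ.card - aS S v.1)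
      = ∑ i, aS S i * (Sᶜ.card - aS S i) := by
    rw [← Finset.sum_fiberwise' Sᶜ Sigma.fst (fun i => Sᶜ.card - aS S i)]
    exact Finset.sum_congr rfl fun i _ => by
      rw [Finset.sum_const, smul_eq_mul]; rfl
  have h3 : ∀ i : Fin k, aS S i * (Sᶜ.card - aS S i) + (aS S i) ^ 2
      = aS S i * Sᶜ.card := by
    intro i
    have hle : aS S i ≤ Sᶜ.card := Finset.card_le_card (Finset.filter_subset _ _)
    have : Sᶜ.card - aS S i + aS S i = Sᶜ.card := Nat.sub_add_cancel hle
    nlinarith [this]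
  have h4 : ∑ i, aS S i * Sᶜ.card = Sᶜ.card ^ 2 := by
    rw [← Finset.sum_mul, aS_sum, sq]
  calc 2 * (Hgr S).edgeFinset.card + ∑ i, (aS S i) ^ 2
      = ∑ v, (Hgr S).degree v + ∑ i, (aS S i) ^ 2 := by rw [hdeg]
    _ = ∑ i, (aS S i * (Sᶜ.card - aS S i) + (aS S i) ^ 2) := by
        rw [h1, h2, Finset.sum_add_distrib]
    _ = ∑ i, aS S i * Sᶜ.card := Finset.sum_congr rfl fun i _ => h3 i
    _ = Sᶜ.card ^ 2 := h4

lemma min_iff_sq (S S' : Finset (Σ i : Fin k, Fin (p i))) (hcard : S'.card = S.card) :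
    ((incE (completeMultipartiteGraph fun i => Fin (p i)) S).ncard ≤
      (incE (completeMultipartiteGraph fun i => Fin (p i)) S').ncard) ↔
    ∑ i, (aS S i) ^ 2 ≤ ∑ i, (aS S' i) ^ 2 := by
  have hE1 : (Hgr S).edgeFinset.card
      ≤ (completeMultipartiteGraph fun i => Fin (p i)).edgeFinset.card :=
    Finset.card_le_card (edgeFinset_mono (Hgr_le S))
  have hE2 : (Hgr S').edgeFinset.card
      ≤ (completeMultipartiteGraph fun i => Fin (p i)).edgeFinset.card :=
    Finset.card_le_card (edgeFinset_mono (Hgr_le S'))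
  have hm : S'ᶜ.card = Sᶜ.card := by
    rw [Finset.card_compl, Finset.card_compl, hcard]
  have hc1 := Hgr_count S
  have hc2 := Hgr_count S'
  rw [incE_ncard, incE_ncard, hm] at *
  omega

end Aux

lemma claimB {k : ℕ} (p : Fin k → ℕ) (a : Fin k → ℕ) (hap : ∀ i, a i ≤ p i)
    (hmin : ∀ i j, i ≠ j → a j + 2 ≤ a i → a j = p j) :
    ∀ D : ℕ, ∀ b : Fin k → ℕ, (∀ i, b i ≤ p i) → ∑ i, b i = ∑ i, a i →
      (∑ i, (max (a i) (b i) - min (a i) (b i))) ≤ D →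
      ∑ i, a i ^ 2 ≤ ∑ i, b i ^ 2 := by
  intro D
  induction D using Nat.strong_induction_on with
  | _ D IH =>
    intro b hbp hsum hD
    by_cases hab : ∀ i, a i = b i
    · exact le_of_eq (Finset.sum_congr rfl fun i _ => by rw [hab i])
    push_neg at hab
    obtain ⟨i0, hi0⟩ := hab
    have hex1 : ∃ i, a i < b i := by
      by_contra h
      push_neg at h
      have : ∑ i, b i < ∑ i, a i := by
        apply Finset.sum_lt_sum (fun i _ => h i)
        rcases lt_or_gt_of_ne hi0 with h1 | h1
        · exact absurd h1 (not_lt.mpr (h i0))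
        · exact ⟨i0, mem_univ _, h1⟩
      omega
    have hex2 : ∃ j, b j < a j := by
      by_contra h
      push_neg at h
      obtain ⟨i, hi⟩ := hex1
      have : ∑ i, a i < ∑ i, b i :=
        Finset.sum_lt_sum (fun i _ => h i) ⟨i, mem_univ _, hi⟩
      omega
    obtain ⟨i, hi⟩ := hex1
    obtain ⟨j, hj⟩ := hex2
    have hij : i ≠ j := by intro h; rw [h] at hi; omega
    have key : ∀ f g : Fin k → ℕ, (∀ l, l ≠ i → l ≠ j → f l = g l) →
        ∑ l, f l = f i + f j + ∑ l ∈ univ \ {i, j}, g l := by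
      intro f g hfg
      rw [← Finset.sum_sdiff (subset_univ ({i, j} : Finset (Fin k))),
        Finset.sum_pair hij]
      have : ∑ l ∈ univ \ {i, j}, f l = ∑ l ∈ univ \ {i, j}, g l := by
        apply Finset.sum_congr rfl
        intro l hl
        simp only [mem_sdiff, mem_insert, mem_singleton] at hl
        exact hfg l (fun h => hl.2 (Or.inl h)) (fun h => hl.2 (Or.inr h))
      omega
    by_cases hcase : b j + 1 ≤ b i
    · set b' : Fin k → ℕ := Function.update (Function.update b i (b i - 1)) j (b j + 1) with hb'
      have hb'i : b' i = b i - 1 := by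
        simp [hb', Function.update_of_ne hij, Function.update_self]
      have hb'j : b' j = b j + 1 := by simp [hb', Function.update_self]
      have hb'other : ∀ l, l ≠ i → l ≠ j → b' l = b l := by
        intro l hli hlj
        simp [hb', Function.update_of_ne hlj, Function.update_of_ne hli]
      have hb'p : ∀ l, b' l ≤ p l := by
        intro l
        rcases eq_or_ne l i with rfl | hli
        · rw [hb'i]; exact le_trans (Nat.sub_le _ _) (hbp l)
        rcases eq_or_ne l j with rfl | hlj
        · rw [hb'j]; exact le_trans hj (hap l)
        · rw [hb'other l hli hlj]; exact hbp l
      have hsum' : ∑ l, b' l = ∑ i, a i := by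
        rw [key b' b hb'other, ← hsum, key b b (fun _ _ _ => rfl), hb'i, hb'j]
        omega
      have hsq : ∑ l, b' l ^ 2 ≤ ∑ l, b l ^ 2 := by
        have e1 := key (fun l => b' l ^ 2) (fun l => b l ^ 2)
          (fun l h1 h2 => by rw [hb'other l h1 h2])
        have e2 := key (fun l => b l ^ 2) (fun l => b l ^ 2) (fun _ _ _ => rfl)
        rw [e1, e2, hb'i, hb'j]
        have h1 : 1 ≤ b i := by omega
        obtain ⟨c, hc⟩ : ∃ c, b i = c + 1 := ⟨b i - 1, by omega⟩
        rw [hc]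
        have hbj : b j + 1 ≤ c + 1 := by omega
        simp only [Nat.add_sub_cancel]
        nlinarith
      have hDd : (∑ l, (max (a l) (b' l) - min (a l) (b' l))) + 2 ≤ D := by
        have e1 := key (fun l => max (a l) (b' l) - min (a l) (b' l))
          (fun l => max (a l) (b l) - min (a l) (b l))
          (fun l h1 h2 => by rw [hb'other l h1 h2])
        have e2 := key (fun l => max (a l) (b l) - min (a l) (b l))
          (fun l => max (a l) (b l) - min (a l) (b l)) (fun _ _ _ => rfl)
        rw [e2] at hD
        rw [e1, hb'i, hb'j]
        have h1 : a i < b i := hi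
        have h2 : b j < a j := hj
        omega
      exact le_trans (IH _ (by omega) b' hb'p hsum' le_rfl) hsq
    · push_neg at hcase
      have h2 : a i + 2 ≤ a j := by omega
      have := hmin j i hij.symm h2
      have := hbp i
      omega

/-- Let `G` be the complete multi-partite graph with partite sets `X_i = {i} × Fin (p i)`
(`k ≥ 2`) of order `n` and `1 ≤ r ≤ n`.  An `r`-subset `S` minimizes `|E_G(S)|` over all
`r`-subsets if and only if for all distinct `i, j`:
`|X_i \ S| ≥ 2 + |X_j \ S|` implies `X_j ∩ S = ∅`. -/
theorem stmt16 (k : ℕ) (hk : 2 ≤ k) (p : Fin k → ℕ) (n : ℕ) (hn : n = ∑ i, p i)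
    (r : ℕ) (hr1 : 1 ≤ r) (hrn : r ≤ n)
    (S : Finset (Σ i : Fin k, Fin (p i))) (hS : S.card = r) :
    (∀ S' : Finset (Σ i : Fin k, Fin (p i)), S'.card = r →
        (incE (completeMultipartiteGraph fun i : Fin k => Fin (p i)) S).ncard ≤
          (incE (completeMultipartiteGraph fun i : Fin k => Fin (p i)) S').ncard) ↔
    (∀ i j : Fin k, i ≠ j →
        2 + ((Finset.univ.filter fun v : Σ i : Fin k, Fin (p i) => v.1 = j) \ S).card ≤
          ((Finset.univ.filter fun v : Σ i : Fin k, Fin (p i) => v.1 = i) \ S).card →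
        ∀ x : Fin (p j), (⟨j, x⟩ : Σ i : Fin k, Fin (p i)) ∉ S) := by
  constructor
  · intro hmin i j hij hge x hxS
    rw [aS_eq_sdiff, aS_eq_sdiff] at hge
    have hjlt : aS S j < p j :=
      lt_of_le_of_ne (aS_le S j) fun h => (aS_eq_p_iff S j).mp h x hxS
    have hile : 2 ≤ aS S i := by omega
    set b : Fin k → ℕ :=
      Function.update (Function.update (aS S) i (aS S i - 1)) j (aS S j + 1) with hb
    have hbi : b i = aS S i - 1 := by
      simp [hb, Function.update_of_ne hij, Function.update_self]
    have hbj : b j = aS S j + 1 := by simp [hb, Function.update_self]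
    have hbother : ∀ l, l ≠ i → l ≠ j → b l = aS S l := by
      intro l hli hlj
      simp [hb, Function.update_of_ne hlj, Function.update_of_ne hli]
    have hbp : ∀ l, b l ≤ p l := by
      intro l
      rcases eq_or_ne l i with rfl | hli
      · rw [hbi]; exact le_trans (Nat.sub_le _ _) (aS_le S l)
      rcases eq_or_ne l j with rfl | hlj
      · rw [hbj]; omega
      · rw [hbother l hli hlj]; exact aS_le S l
    have hbsum : ∑ l, b l = Sᶜ.card := by
      rw [sum_split hij b (aS S) hbother, hbi, hbj, ← aS_sum S,
        sum_split hij (aS S) (aS S) (fun _ _ _ => rfl)]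
      omega
    obtain ⟨S', hS'card, hS'a⟩ := realize S b hbp hbsum
    have hsq := (min_iff_sq S S' hS'card).mp (hmin S' (hS'card.trans hS))
    have hb2 : ∑ l, (aS S' l) ^ 2 = ∑ l, (b l) ^ 2 :=
      Finset.sum_congr rfl fun l _ => by rw [hS'a l]
    rw [hb2] at hsq
    have e1 := sum_split hij (fun l => (b l) ^ 2) (fun l => (aS S l) ^ 2)
      (fun l h1 h2 => by rw [hbother l h1 h2])
    have e2 := sum_split hij (fun l => (aS S l) ^ 2) (fun l => (aS S l) ^ 2)
      (fun _ _ _ => rfl)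
    rw [e1, e2, hbi, hbj] at hsq
    obtain ⟨c, hc⟩ : ∃ c, aS S i = c + 1 := ⟨aS S i - 1, by omega⟩
    rw [hc] at hsq hge
    simp only [Nat.add_sub_cancel] at hsq
    nlinarith [hsq, hge]
  · intro hcond S' hS'
    apply (min_iff_sq S S' (by rw [hS', hS])).mpr
    have hmin' : ∀ i j, i ≠ j → aS S j + 2 ≤ aS S i → aS S j = p j := by
      intro i j hij h
      refine (aS_eq_p_iff S j).mpr (hcond i j hij ?_)
      rw [aS_eq_sdiff, aS_eq_sdiff]
      omega
    have hsum : ∑ l, aS S' l = ∑ l, aS S l := by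
      rw [aS_sum, aS_sum, Finset.card_compl, Finset.card_compl, hS', hS]
    exact claimB p (aS S) (aS_le S) hmin' _ (aS S') (aS_le S') hsum le_rfl
end

section
/- Let G be a complete multi-partite graph of order n with at least two partite sets, and let S be an r-element subset of V(G) produced by the greedy algorithm that repeatedly removes a vertex of minimum degree from the remaining graph. Then |E_G(S)| = min over all r-element subsets S' of V(G) of |E_G(S')|. -/
open SimpleGraph

/-- `G` is a complete multi-partite graph: non-adjacency is transitive. -/
def IsCompMultipartite {V : Type} (G : SimpleGraph V) : Prop :=
  ∀ u v w : V, ¬ G.Adj u v → ¬ G.Adj v w → ¬ G.Adj u w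

namespace Stmt17Aux

open Finset

section greedy
variable {Q : Type} [Fintype Q] [DecidableEq Q]

inductive GreedyVec : ℕ → (Q → ℕ) → (Q → ℕ) → Prop
  | zero (a : Q → ℕ) : GreedyVec 0 a a
  | succ (r : ℕ) (a b : Q → ℕ) (q0 : Q) (hmax : ∀ q, a q ≤ a q0) (hpos : 1 ≤ a q0)
      (h : GreedyVec r (Function.update a q0 (a q0 - 1)) b) : GreedyVec (r+1) a b

lemma greedyVec_min {r : ℕ} {a b : Q → ℕ} (h : GreedyVec r a b) :
    ∀ b' : Q → ℕ, (∀ q, b' q ≤ a q) → ((∑ q, b' q) + r = ∑ q, a q) →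
      ∑ q, b q * b q ≤ ∑ q, b' q * b' q := by
  induction h with
  | zero a =>
      intro b' hle hsum
      simp only [add_zero] at hsum
      have : ∀ q ∈ Finset.univ, b' q = a q := by
        intro q _
        by_contra hne
        have hlt : b' q < a q := lt_of_le_of_ne (hle q) hne
        have : ∑ q, b' q < ∑ q, a q :=
          Finset.sum_lt_sum (fun i _ => hle i) ⟨q, mem_univ q, hlt⟩
        omega
      exact le_of_eq (Finset.sum_congr rfl (fun q hq => by rw [this q hq]))
  | succ r a b q0 hmax hpos h ih =>
      intro b' hle hsum
      have hsplitA : ∑ q, a q = a q0 + ∑ q ∈ Finset.univ.erase q0, a q :=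
        (Finset.add_sum_erase _ _ (mem_univ q0)).symm
      have hsumUpd : ∑ q, Function.update a q0 (a q0 - 1) q
          = (a q0 - 1) + ∑ q ∈ Finset.univ.erase q0, a q := by
        rw [← Finset.add_sum_erase _ _ (mem_univ q0), Function.update_self]
        congr 1
        exact Finset.sum_congr rfl (fun q hq => by
          rw [Function.update_of_ne (Finset.ne_of_mem_erase hq)])
      by_cases hc : b' q0 ≤ a q0 - 1
      · refine ih b' (fun q => ?_) (by omega)
        by_cases hq : q = q0
        · subst hq; simpa using hc
        · rw [Function.update_of_ne hq]; exact hle q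
      · have hb0 : b' q0 = a q0 := le_antisymm (hle q0) (by omega)
        have hex : ∃ q1, q1 ≠ q0 ∧ b' q1 < a q1 := by
          by_contra hno
          push_neg at hno
          have heq : ∀ q ∈ Finset.univ, b' q = a q := by
            intro q _
            by_cases hq : q = q0
            · subst hq; exact hb0
            · exact le_antisymm (hle q) (hno q hq)
          have : ∑ q, b' q = ∑ q, a q := Finset.sum_congr rfl heq
          omega
        obtain ⟨q1, hq1ne, hq1lt⟩ := hex
        set b'' : Q → ℕ := Function.update (Function.update b' q0 (a q0 - 1)) q1 (b' q1 + 1) with hb''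
        have hb''q0 : b'' q0 = a q0 - 1 := by
          rw [hb'', Function.update_of_ne (Ne.symm hq1ne), Function.update_self]
        have hb''q1 : b'' q1 = b' q1 + 1 := by rw [hb'', Function.update_self]
        have hb''other : ∀ q, q ≠ q0 → q ≠ q1 → b'' q = b' q := by
          intro q h0 h1
          rw [hb'', Function.update_of_ne h1, Function.update_of_ne h0]
        have hle'' : ∀ q, b'' q ≤ Function.update a q0 (a q0 - 1) q := by
          intro q
          by_cases h0 : q = q0
          · subst h0; rw [hb''q0, Function.update_self]
          · rw [Function.update_of_ne h0]
            by_cases h1 : q = q1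
            · subst h1; rw [hb''q1]; omega
            · rw [hb''other q h0 h1]; exact hle q
        have hsum2 : ∀ f : ℕ → ℕ, ∑ q, f (b'' q) + f (b' q0) + f (b' q1)
            = ∑ q, f (b' q) + f (b'' q0) + f (b'' q1) := by
          intro f
          have e1 : ∑ q, f (b'' q) = f (b'' q0) + f (b'' q1)
              + ∑ q ∈ (Finset.univ.erase q0).erase q1, f (b'' q) := by
            rw [← Finset.add_sum_erase _ _ (mem_univ q0)]
            rw [← Finset.add_sum_erase _ (fun q => f (b'' q))
              (Finset.mem_erase.mpr ⟨hq1ne, mem_univ q1⟩)]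
            ring
          have e2 : ∑ q, f (b' q) = f (b' q0) + f (b' q1)
              + ∑ q ∈ (Finset.univ.erase q0).erase q1, f (b' q) := by
            rw [← Finset.add_sum_erase _ _ (mem_univ q0)]
            rw [← Finset.add_sum_erase _ (fun q => f (b' q))
              (Finset.mem_erase.mpr ⟨hq1ne, mem_univ q1⟩)]
            ring
          have e3 : ∑ q ∈ (Finset.univ.erase q0).erase q1, f (b'' q)
              = ∑ q ∈ (Finset.univ.erase q0).erase q1, f (b' q) := by
            refine Finset.sum_congr rfl (fun q hq => ?_)
            rw [hb''other q (Finset.ne_of_mem_erase (Finset.mem_of_mem_erase hq))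
              (Finset.ne_of_mem_erase hq)]
          omega
        have hsum'' : (∑ q, b'' q) + r = ∑ q, Function.update a q0 (a q0 - 1) q := by
          have := hsum2 id
          simp only [id] at this
          omega
        refine le_trans (ih b'' hle'' hsum'') ?_
        have hkey : b'' q0 * b'' q0 + b'' q1 * b'' q1 ≤ b' q0 * b' q0 + b' q1 * b' q1 := by
          rw [hb''q0, hb''q1, hb0]
          have h1 : b' q1 + 1 ≤ a q0 := le_trans hq1lt (hmax q1)
          nlinarith [hpos, h1]
        have := hsum2 (fun x => x * x)
        omega
end greedy

lemma pairs_split {V Q : Type} [Fintype V] [DecidableEq V] [Fintype Q] [DecidableEq Q]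
    (c : V → Q) (X : Finset V) :
    ((X ×ˢ X).filter fun p => c p.1 ≠ c p.2).card
      + ∑ q, ((X.filter fun v => c v = q).card) * ((X.filter fun v => c v = q).card)
      = X.card * X.card := by
  have hsplit := Finset.card_filter_add_card_filter_not
    (s := X ×ˢ X) (p := fun p => c p.1 = c p.2)
  have hsame : ((X ×ˢ X).filter fun p => c p.1 = c p.2)
      = Finset.univ.biUnion (fun q => (X.filter fun v => c v = q) ×ˢ (X.filter fun v => c v = q)) := by
    ext p
    simp only [mem_filter, mem_product, mem_biUnion, mem_univ, true_and]
    constructor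
    · rintro ⟨⟨h1, h2⟩, h3⟩
      exact ⟨c p.1, ⟨h1, rfl⟩, ⟨h2, h3.symm⟩⟩
    · rintro ⟨q, ⟨h1, h1'⟩, ⟨h2, h2'⟩⟩
      exact ⟨⟨h1, h2⟩, h1'.trans h2'.symm⟩
  have hdisj : ∀ q ∈ (Finset.univ : Finset Q), ∀ q' ∈ Finset.univ, q ≠ q' →
      Disjoint ((X.filter fun v => c v = q) ×ˢ (X.filter fun v => c v = q))
        ((X.filter fun v => c v = q') ×ˢ (X.filter fun v => c v = q')) := by
    intro q _ q' _ hne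
    rw [Finset.disjoint_left]
    rintro p hp hp'
    simp only [mem_product, mem_filter] at hp hp'
    exact hne (hp.1.2.symm.trans hp'.1.2)
  have hcard : ((X ×ˢ X).filter fun p => c p.1 = c p.2).card
      = ∑ q, ((X.filter fun v => c v = q).card) * ((X.filter fun v => c v = q).card) := by
    rw [hsame, Finset.card_biUnion hdisj]
    exact Finset.sum_congr rfl (fun q _ => Finset.card_product _ _)
  rw [← hcard]
  rw [Finset.card_product] at hsplit
  simp only [ne_eq]
  omega

lemma incE_double {V : Type} [Fintype V] [DecidableEq V] (G : SimpleGraph V)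
    [DecidableRel G.Adj] (T : Finset V) :
    2 * (incE G T).ncard + ((Tᶜ ×ˢ Tᶜ).filter fun p => G.Adj p.1 p.2).card
      = ((Finset.univ ×ˢ Finset.univ).filter fun p => G.Adj p.1 p.2).card := by
  classical
  set ET : Finset (Sym2 V) := G.edgeFinset.filter (fun e => ∃ v ∈ T, v ∈ e) with hET
  have h1 : (incE G T).ncard = ET.card := by
    have : incE G T = ↑ET := by
      ext e
      simp [incE, hET, SimpleGraph.mem_edgeFinset]
    rw [this, Set.ncard_coe_finset]
  set PT : Finset (V × V) := (Finset.univ ×ˢ Finset.univ).filter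
    (fun p => G.Adj p.1 p.2 ∧ (p.1 ∈ T ∨ p.2 ∈ T)) with hPT
  have h2 : PT.card = 2 * ET.card := by
    rw [Finset.card_eq_sum_card_fiberwise (f := (Sym2.mk.uncurry : V × V → Sym2 V)) (t := ET) ?_]
    · have hfib : ∀ e ∈ ET, (PT.filter fun p => Sym2.mk.uncurry p = e).card = 2 := by
        intro e he
        induction e using Sym2.ind with
        | _ x y =>
          rw [hET, mem_filter, SimpleGraph.mem_edgeFinset, SimpleGraph.mem_edgeSet] at he
          obtain ⟨hadj, htouch⟩ := he
          have hxy : x ≠ y := hadj.ne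
          have htouch' : x ∈ T ∨ y ∈ T := by
            obtain ⟨v, hv, hv'⟩ := htouch
            rw [Sym2.mem_iff] at hv'
            rcases hv' with rfl | rfl
            · exact Or.inl hv
            · exact Or.inr hv
          have : (PT.filter fun p => Sym2.mk.uncurry p = s(x, y)) = {(x, y), (y, x)} := by
            ext p
            simp only [mem_filter, hPT, mem_product, mem_univ, and_self, true_and,
              mem_insert, mem_singleton]
            constructor
            · rintro ⟨_, hmk⟩
              simp only [Function.uncurry_def, Sym2.eq_iff] at hmk
              rcases hmk with ⟨h1, h2⟩ | ⟨h1, h2⟩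
              · left; exact Prod.ext h1 h2
              · right; exact Prod.ext h1 h2
            · rintro (rfl | rfl)
              · exact ⟨⟨hadj, htouch'⟩, rfl⟩
              · exact ⟨⟨hadj.symm, htouch'.symm⟩, by rw [Sym2.eq_swap]; rfl⟩
          rw [this]
          exact Finset.card_pair (fun h => hxy (congrArg Prod.fst h))
      rw [Finset.sum_congr rfl hfib, Finset.sum_const, smul_eq_mul, mul_comm]
    · intro p hp
      simp only [Finset.mem_coe, Function.uncurry_def] at hp ⊢
      rw [hPT, mem_filter] at hp
      rw [hET, mem_filter, SimpleGraph.mem_edgeFinset, SimpleGraph.mem_edgeSet]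
      refine ⟨hp.2.1, ?_⟩
      obtain ⟨p1, p2⟩ := p
      rcases hp.2.2 with h | h
      · exact ⟨p1, h, by simp⟩
      · exact ⟨p2, h, by simp⟩
  have h3 : PT.card + ((Tᶜ ×ˢ Tᶜ).filter fun p => G.Adj p.1 p.2).card
      = ((Finset.univ ×ˢ Finset.univ).filter fun p => G.Adj p.1 p.2).card := by
    have hsplit := Finset.card_filter_add_card_filter_not
      (s := (Finset.univ ×ˢ Finset.univ).filter fun p => G.Adj p.1 p.2)
      (p := fun p => p.1 ∈ T ∨ p.2 ∈ T)
    rw [Finset.filter_filter, Finset.filter_filter] at hsplit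
    have e1 : ((Finset.univ ×ˢ Finset.univ).filter fun p => G.Adj p.1 p.2 ∧ (p.1 ∈ T ∨ p.2 ∈ T)) = PT := rfl
    have e2 : ((Finset.univ ×ˢ Finset.univ).filter fun p => G.Adj p.1 p.2 ∧ ¬(p.1 ∈ T ∨ p.2 ∈ T))
        = ((Tᶜ ×ˢ Tᶜ).filter fun p => G.Adj p.1 p.2) := by
      ext p
      simp only [mem_filter, mem_product, mem_univ, and_self, true_and, mem_compl]
      tauto
    rw [e1, e2] at hsplit
    exact hsplit
  omega

end Stmt17Aux

open Stmt17Aux Finset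

/-- Let `G` be a complete multi-partite graph with at least two partite sets and let
`S = {u 0, …, u (r−1)}` be produced by the greedy algorithm that repeatedly picks a
vertex of minimum degree in the remaining graph and removes it.  Then `|E_G(S)|` is the
minimum of `|E_G(S')|` over all `r`-element subsets `S'`. -/
theorem stmt17 {V : Type} [Fintype V] [DecidableEq V] (G : SimpleGraph V)
    (hG : IsCompMultipartite G) (hGbot : G ≠ ⊥)
    (r : ℕ) (hr : 1 ≤ r) (hrn : r ≤ Fintype.card V)
    (u : Fin r → V) (hinj : Function.Injective u)
    (hgreedy : ∀ i : Fin r, ∀ w : V, (∀ j : Fin r, j < i → u j ≠ w) →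
      (G.neighborSet (u i) ∩ {v | ∀ j : Fin r, j < i → u j ≠ v}).ncard ≤
        (G.neighborSet w ∩ {v | ∀ j : Fin r, j < i → u j ≠ v}).ncard)
    (S : Finset V) (hS : S = Finset.image u Finset.univ) :
    (incE G S).ncard =
      sInf {m | ∃ S' : Finset V, S'.card = r ∧ (incE G S').ncard = m} := by
  classical
  -- the partition setoid
  let st : Setoid V := ⟨fun v w => ¬ G.Adj v w,
    ⟨fun v => G.loopless.irrefl v, fun {x y} h ha => h ha.symm,
     fun {x y z} hxy hyz => hG x y z hxy hyz⟩⟩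
  haveI : DecidableEq (Quotient st) := Classical.decEq _
  haveI : Fintype (Quotient st) := Fintype.ofFinite _
  set c : V → Quotient st := Quotient.mk st with hc
  have hAdj : ∀ v w : V, G.Adj v w ↔ c v ≠ c w := by
    intro v w
    rw [hc]
    simp only [Ne, Quotient.eq]
    show G.Adj v w ↔ ¬ ¬ G.Adj v w
    exact (not_not).symm
  -- remaining vertex sets and class counts
  set Rem : ℕ → Finset V :=
    fun i => Finset.univ.filter (fun v => ∀ j : Fin r, (j : ℕ) < i → u j ≠ v) with hRem
  set β : ℕ → Quotient st → ℕ :=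
    fun i q => ((Rem i).filter (fun v => c v = q)).card with hβ
  have hRem0 : Rem 0 = Finset.univ := by
    ext v; simp [hRem]
  have hSnotmem : ∀ v : V, v ∉ S ↔ ∀ j : Fin r, u j ≠ v := by
    intro v; simp [hS]
  have hRemr : Rem r = Sᶜ := by
    ext v
    simp only [hRem, mem_filter, mem_univ, true_and, Finset.mem_compl, hSnotmem]
    exact ⟨fun h j => h j j.isLt, fun h j _ => h j⟩
  -- degree identity
  have hdeg : ∀ (i : Fin r) (x : V),
      (G.neighborSet x ∩ {v | ∀ j : Fin r, j < i → u j ≠ v}).ncard + β i (c x)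
        = (Rem i).card := by
    intro i x
    have hset : G.neighborSet x ∩ {v | ∀ j : Fin r, j < i → u j ≠ v}
        = ↑((Rem (i : ℕ)).filter (fun v => G.Adj x v)) := by
      ext v
      simp only [Set.mem_inter_iff, SimpleGraph.mem_neighborSet, Set.mem_setOf_eq,
        Finset.coe_filter, hRem, mem_filter, mem_univ, true_and, Fin.lt_def]
      tauto
    rw [hset, Set.ncard_coe_finset]
    have h2 : ((Rem (i : ℕ)).filter (fun v => ¬ G.Adj x v))
        = ((Rem (i : ℕ)).filter (fun v => c v = c x)) := by
      refine Finset.filter_congr (fun v _ => ?_)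
      rw [hAdj x v, not_not]
      exact ⟨fun h => h.symm, fun h => h.symm⟩
    have h3 := Finset.card_filter_add_card_filter_not
      (s := Rem (i : ℕ)) (p := fun v => G.Adj x v)
    rw [h2] at h3
    have h4 : β (i : ℕ) (c x) = ((Rem (i : ℕ)).filter (fun v => c v = c x)).card := rfl
    omega
  -- greedy step facts
  have humem : ∀ i : Fin r, u i ∈ Rem (i : ℕ) := by
    intro i
    rw [hRem]
    refine mem_filter.mpr ⟨mem_univ _, fun j hj heq => ?_⟩
    have := congrArg Fin.val (hinj heq)
    omega
  have hRemSucc : ∀ i : Fin r, Rem ((i : ℕ) + 1) = (Rem (i : ℕ)).erase (u i) := by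
    intro i
    ext v
    simp only [hRem, mem_filter, mem_univ, true_and, Finset.mem_erase]
    constructor
    · intro h
      refine ⟨fun heq => h i (by omega) heq.symm, fun j hj => h j (by omega)⟩
    · rintro ⟨hne, h⟩ j hj
      by_cases hji : (j : ℕ) < (i : ℕ)
      · exact h j hji
      · have : j = i := Fin.ext (by omega)
        subst this
        exact fun heq => hne heq.symm
  have hmax : ∀ (i : Fin r) (q : Quotient st), β (i : ℕ) q ≤ β (i : ℕ) (c (u i)) := by
    intro i q
    by_cases h0 : ((Rem (i : ℕ)).filter (fun v => c v = q)).Nonempty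
    · obtain ⟨w, hw⟩ := h0
      have hw1 : w ∈ Rem (i : ℕ) := (mem_filter.mp hw).1
      have hw2 : c w = q := (mem_filter.mp hw).2
      have hwcond : ∀ j : Fin r, j < i → u j ≠ w := by
        intro j hj
        have := (mem_filter.mp (by rw [hRem] at hw1; exact hw1)).2
        exact this j (Fin.lt_def.mp hj)
      have hg := hgreedy i w hwcond
      have hdi := hdeg i (u i)
      have hdw := hdeg i w
      rw [hw2] at hdw
      omega
    · have h0' : β (i : ℕ) q = 0 := by
        rw [hβ]
        exact Finset.card_eq_zero.mpr (Finset.not_nonempty_iff_eq_empty.mp h0)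
      omega
  have hpos : ∀ i : Fin r, 1 ≤ β (i : ℕ) (c (u i)) := by
    intro i
    have : u i ∈ (Rem (i : ℕ)).filter (fun v => c v = c (u i)) :=
      mem_filter.mpr ⟨humem i, rfl⟩
    exact Finset.card_pos.mpr ⟨u i, this⟩
  have hstep : ∀ i : Fin r,
      β ((i : ℕ) + 1) = Function.update (β (i : ℕ)) (c (u i)) (β (i : ℕ) (c (u i)) - 1) := by
    intro i
    funext q
    by_cases hq : q = c (u i)
    · subst hq
      rw [Function.update_self]
      show ((Rem ((i : ℕ) + 1)).filter (fun v => c v = c (u i))).card = _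
      rw [hRemSucc i, Finset.filter_erase,
        Finset.card_erase_of_mem (a := u i)
          (s := (Rem (i : ℕ)).filter (fun v => c v = c (u i)))
          (mem_filter.mpr ⟨humem i, rfl⟩)]
    · rw [Function.update_of_ne hq]
      show ((Rem ((i : ℕ) + 1)).filter (fun v => c v = q)).card = _
      rw [hRemSucc i, Finset.filter_erase, Finset.erase_eq_of_notMem
        (fun hmem => hq ((mem_filter.mp hmem).2.symm))]
  -- the greedy chain
  have chain : ∀ k i, i + k = r → GreedyVec k (β i) (β r) := by
    intro k
    induction k with
    | zero =>
        intro i h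
        have : i = r := by omega
        subst this
        exact GreedyVec.zero _
    | succ k ih =>
        intro i h
        have hi : i < r := by omega
        refine GreedyVec.succ k (β i) (β r) (c (u ⟨i, hi⟩)) (hmax ⟨i, hi⟩) (hpos ⟨i, hi⟩) ?_
        have hs := hstep ⟨i, hi⟩
        simp only [Fin.val_mk] at hs ⊢
        rw [← hs]
        exact ih (i + 1) (by omega)
  have gv : GreedyVec r (β 0) (β r) := chain r 0 (by omega)
  -- counting identity
  have hcount : ∀ T : Finset V, T.card = r →
      2 * (incE G T).ncard + (Fintype.card V - r) * (Fintype.card V - r)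
        = ((Finset.univ ×ˢ Finset.univ).filter fun p => G.Adj p.1 p.2).card
          + ∑ q, ((Tᶜ.filter fun v => c v = q).card) * ((Tᶜ.filter fun v => c v = q).card) := by
    intro T hT
    have h1 := incE_double G T
    have h3 : ((Tᶜ ×ˢ Tᶜ).filter fun p => G.Adj p.1 p.2)
        = ((Tᶜ ×ˢ Tᶜ).filter fun p => c p.1 ≠ c p.2) :=
      Finset.filter_congr (fun p _ => by rw [hAdj])
    have h2 := pairs_split c Tᶜ
    have h4 : Tᶜ.card = Fintype.card V - r := by rw [Finset.card_compl, hT]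
    rw [h3] at h1
    rw [h4] at h2
    omega
  have hSc : S.card = r := by
    rw [hS, Finset.card_image_of_injective _ hinj, Finset.card_univ, Fintype.card_fin]
  -- minimality
  have hmono : ∀ S' : Finset V, S'.card = r → (incE G S).ncard ≤ (incE G S').ncard := by
    intro S' hS'
    have hc1 := hcount S hSc
    have hc2 := hcount S' hS'
    have hb'le : ∀ q, (S'ᶜ.filter fun v => c v = q).card ≤ β 0 q := by
      intro q
      rw [hβ]
      simp only [hRem0]
      exact Finset.card_le_card (Finset.filter_subset_filter _ (Finset.subset_univ _))
    have hfibsum : ∀ X : Finset V, ∑ q, (X.filter fun v => c v = q).card = X.card :=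
      fun X => (Finset.card_eq_sum_card_fiberwise (fun x _ => Finset.mem_univ (c x))).symm
    have hsumb' : (∑ q, (S'ᶜ.filter fun v => c v = q).card) + r = ∑ q, β 0 q := by
      have e2 : ∑ q, β 0 q = Fintype.card V := by
        rw [hβ]
        simp only [hRem0]
        rw [hfibsum Finset.univ, Finset.card_univ]
      rw [hfibsum, e2, Finset.card_compl, hS']
      omega
    have hmin := greedyVec_min gv _ hb'le hsumb'
    have hβr : ∀ q, β r q = (Sᶜ.filter fun v => c v = q).card := by
      intro q
      rw [hβ]
      simp only [hRemr]
    simp only [hβr] at hmin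
    omega
  have hmem : (incE G S).ncard ∈ {m | ∃ S' : Finset V, S'.card = r ∧ (incE G S').ncard = m} :=
    ⟨S, hSc, rfl⟩
  refine le_antisymm (le_csInf ⟨_, hmem⟩ ?_) (Nat.sInf_le hmem)
  rintro m ⟨S', hS', rfl⟩
  exact hmono S' hS'
end
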